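/- arXiv:1509.04617 — 6 statements merged into one kernel-verified Lean document; each statement's English description precedes it below -/
import Mathlib

section
/- Let s : ℕ → ℝ satisfy s(0)=0, s(1)=1, and s(n+1) = (1/(n+1)) · Σ_{k=1}^{n+1} max{ s(n), 1 + s(n+1-k) } for n ≥ 1. Then s is strictly increasing on the positive integers: s(n) < s(n+1) for all n ≥ 1. -/
open Finset

/-! The `k = 1` term of the recursion is `max (s n) (1 + s n) = 1 + s n` and every other term is
at least `s n`, so the average `s (n + 1)` is at least `s n + 1 / (n + 1)`. -/

theorem card_nsmul_add_sub_le_sum_max {ι α : Type*} [AddCommGroup α] [LinearOrder α]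
    [IsOrderedAddMonoid α] {s : Finset ι} {i : ι} (hi : i ∈ s) (a : α) (f : ι → α) :
    #s • a + (f i - a) ≤ ∑ k ∈ s, max a (f k) := by
  classical
  obtain ⟨m, hcard⟩ : ∃ m, #s = m + 1 := Nat.exists_eq_add_one.2 (card_pos.2 ⟨i, hi⟩)
  calc #s • a + (f i - a) = f i + ∑ _k ∈ s.erase i, a := by
        rw [sum_const, card_erase_of_mem hi, hcard, Nat.add_sub_cancel, succ_nsmul]; abel
    _ ≤ max a (f i) + ∑ k ∈ s.erase i, max a (f k) :=
        add_le_add (le_max_right _ _) (sum_le_sum fun _ _ => le_max_left _ _)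
    _ = ∑ k ∈ s, max a (f k) := add_sum_erase s (fun k => max a (f k)) hi

theorem stmt_1_general (s : ℕ → ℝ)
    (hrec : ∀ n : ℕ, 1 ≤ n →
      s (n + 1) = (1 / ((n : ℝ) + 1)) *
        ∑ k ∈ Finset.Icc 1 (n + 1), max (s n) (1 + s (n + 1 - k))) :
    ∀ n : ℕ, 1 ≤ n → s n < s (n + 1) := by
  intro n hn
  have hsum := card_nsmul_add_sub_le_sum_max (s := Icc 1 (n + 1)) (i := 1)
    (by simp) (s n) (fun k => 1 + s (n + 1 - k))
  simp only [Nat.card_Icc, add_tsub_cancel_right, nsmul_eq_mul, Nat.cast_add, Nat.cast_one] at hsum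
  rw [hrec n hn, one_div_mul_eq_div, lt_div_iff₀ (by positivity)]
  linarith

theorem stmt_1 (s : ℕ → ℝ) (h0 : s 0 = 0) (h1 : s 1 = 1)
    (hrec : ∀ n : ℕ, 1 ≤ n →
      s (n + 1) = (1 / ((n : ℝ) + 1)) *
        ∑ k ∈ Finset.Icc 1 (n + 1), max (s n) (1 + s (n + 1 - k))) :
    ∀ n : ℕ, 1 ≤ n → s n < s (n + 1) :=
  stmt_1_general s hrec
end

section
/- Let s : ℕ → ℝ satisfy s(0)=0, s(1)=1, and the recursion s(n+1) = (1/(n+1)) Σ_{k=1}^{n+1} max{s(n), 1+s(n+1-k)}, and suppose s is monotone increasing. Then for all n ≥ 1, s(n+1) = (1/(n+1)) · max_{1 ≤ k ≤ n} { k + (n-k+1)·s(n) + Σ_{i=n-k+1}^{n} s(i) }. -/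
open Finset

/-- `H n k g = k + (n-k+1) g(n) + ∑_{i=n-k+1}^{n} g(i)`. -/
noncomputable def H (g : ℕ → ℝ) (n k : ℕ) : ℝ :=
  (k : ℝ) + ((n : ℝ) - (k : ℝ) + 1) * g n + ∑ i ∈ Finset.Icc (n - k + 1) n, g i

/-!
Write `a j = 1 + s (n + 1 - j)` and `c = s n`. Since `H s n k` is the sum over `j ∈ [1, n + 1]`
of `a j` for `j ≤ k` and of `c` for `j > k`, every `H s n k` is at most `∑ j, max c (a j)`.
Conversely `a` is antitone, `a 1 ≥ c` and `a (n + 1) = 1 ≤ c`, so `{j | c ≤ a j}` is an initial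
segment `[1, k]` with `1 ≤ k ≤ n`, and for this `k` the two sums agree term by term.
-/

lemma H_eq_sum_ite (g : ℕ → ℝ) {n k : ℕ} (hk : k ≤ n) :
    H g n k = ∑ j ∈ Icc 1 (n + 1), if j ≤ k then 1 + g (n + 1 - j) else g n := by
  have hlow : (Icc 1 (n + 1)).filter (· ≤ k) = Icc 1 k := by
    ext j; simp only [mem_filter, mem_Icc]; omega
  have hhigh : (Icc 1 (n + 1)).filter (¬ · ≤ k) = Ioc k (n + 1) := by
    ext j; simp only [mem_filter, mem_Icc, mem_Ioc]; omega
  have hreflect : ∑ j ∈ Icc 1 k, g (n + 1 - j) = ∑ i ∈ Icc (n - k + 1) n, g i := by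
    refine sum_nbij' (fun j => n + 1 - j) (fun i => n + 1 - i) ?_ ?_ ?_ ?_ fun _ _ => rfl <;>
      intro j hj <;> simp only [mem_Icc] at hj ⊢ <;> omega
  rw [sum_ite, hlow, hhigh, sum_add_distrib, hreflect, sum_const, sum_const, Nat.card_Icc,
    Nat.card_Ioc, nsmul_eq_mul, nsmul_eq_mul, Nat.cast_sub (Nat.le_succ_of_le hk), H]
  push_cast
  ring

lemma H_le_sum_max (g : ℕ → ℝ) {n k : ℕ} (hk : k ≤ n) :
    H g n k ≤ ∑ j ∈ Icc 1 (n + 1), max (g n) (1 + g (n + 1 - j)) := by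
  rw [H_eq_sum_ite g hk]
  refine sum_le_sum fun j _ => ?_
  split_ifs
  · exact le_max_right _ _
  · exact le_max_left _ _

lemma exists_H_eq_sum_max {s : ℕ → ℝ} (h0 : s 0 = 0) (h1 : s 1 = 1) (hmono : Monotone s)
    {n : ℕ} (hn : 1 ≤ n) :
    ∃ k ∈ Icc 1 n, H s n k = ∑ j ∈ Icc 1 (n + 1), max (s n) (1 + s (n + 1 - j)) := by
  classical
  let P j := s n ≤ 1 + s (n + 1 - j)
  let k := Nat.findGreatest P n
  have hstart : P 1 := by simp [P]
  have hk : P k := Nat.findGreatest_spec hn hstart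
  have hsn : 1 ≤ s n := h1 ▸ hmono hn
  have hkn : k ≤ n := Nat.findGreatest_le n
  refine ⟨k, mem_Icc.2 ⟨Nat.le_findGreatest hn hstart, hkn⟩, ?_⟩
  rw [H_eq_sum_ite s hkn]
  refine sum_congr rfl fun j hj => ?_
  obtain ⟨-, hjn⟩ := mem_Icc.1 hj
  split_ifs with hjk
  · have : s (n + 1 - k) ≤ s (n + 1 - j) := hmono (by omega)
    exact (max_eq_right (by linarith)).symm
  · refine (max_eq_left ?_).symm
    rcases Nat.lt_or_ge n j with hjlast | hjle
    · rw [show n + 1 - j = 0 by omega, h0]; linarith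
    · exact le_of_not_ge (Nat.findGreatest_is_greatest (not_le.1 hjk) hjle)

theorem stmt_2 (s : ℕ → ℝ) (h0 : s 0 = 0) (h1 : s 1 = 1)
    (hrec : ∀ n : ℕ, 1 ≤ n →
      s (n + 1) = (1 / ((n : ℝ) + 1)) *
        ∑ k ∈ Finset.Icc 1 (n + 1), max (s n) (1 + s (n + 1 - k)))
    (hmono : Monotone s) :
    ∀ n : ℕ, ∀ hn : 1 ≤ n,
      s (n + 1) = (1 / ((n : ℝ) + 1)) *
        (Finset.Icc 1 n).sup' (Finset.nonempty_Icc.mpr hn) (fun k => H s n k) := by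
  intro n hn
  rw [hrec n hn]
  congr 1
  obtain ⟨k, hk, hsum⟩ := exists_H_eq_sum_max h0 h1 hmono hn
  refine le_antisymm (hsum ▸ le_sup' _ hk) (sup'_le _ _ fun k hk => ?_)
  exact H_le_sum_max s (mem_Icc.1 hk).2
end

section
/- (Upper Comparison Lemma) Let H(n,k,g) = k + (n-k+1)·g(n) + Σ_{i=n-k+1}^{n} g(i). Let s : ℕ → ℝ satisfy s(1) = 1 and s(n+1) = (1/(n+1)) max_{1≤k≤n} H(n,k,s) for n ≥ 1. Suppose g : ℕ → ℝ and δ : ℕ → ℝ≥0 satisfy 1 ≤ g(1) + δ(1) and (1/(n+1)) max_{1≤k≤n} H(n,k,g) ≤ g(n+1) + δ(n+1) for all n ≥ 1. Then s(n) ≤ g(n) + Σ_{i=1}^{n} δ(i) for all n ≥ 1. -/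
open Finset

/-- `max_{1 ≤ k ≤ n} H(n,k,g)` for `n ≥ 1`. -/
noncomputable def maxH (g : ℕ → ℝ) (n : ℕ) (hn : 1 ≤ n) : ℝ :=
  (Finset.Icc 1 n).sup' (Finset.nonempty_Icc.mpr hn) (fun k => H g n k)

/-!
The operator `g ↦ maxH g n / (n + 1)` is monotone in the values `g 1, …, g n`, and adding a
constant `c` to `g` adds exactly `c` to it. Monotonicity gives a comparison principle: a
subsolution of the recursion stays below a supersolution. Since the partial sums
`D n = ∑_{i ≤ n} δ i` are nondecreasing, `g + D` is bounded on `[1, n]` by `g + D n`, so the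
operator applied to `g + D` is at most `g (n + 1) + δ (n + 1) + D n = (g + D) (n + 1)`: the
function `g + D` is a supersolution, while `s` is a solution.
-/

lemma H_mono {f f' : ℕ → ℝ} {n k : ℕ} (hk : k ≤ n) (hn : 1 ≤ n)
    (h : ∀ i ∈ Icc 1 n, f i ≤ f' i) : H f n k ≤ H f' n k := by
  have hcoef : (0 : ℝ) ≤ n - k + 1 := by
    have : (k : ℝ) ≤ n := by exact_mod_cast hk
    linarith
  have hsum : ∑ i ∈ Icc (n - k + 1) n, f i ≤ ∑ i ∈ Icc (n - k + 1) n, f' i :=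
    sum_le_sum fun i hi => h i (Icc_subset_Icc (by omega) le_rfl hi)
  have hlast := mul_le_mul_of_nonneg_left (h n (mem_Icc.mpr ⟨hn, le_rfl⟩)) hcoef
  unfold H
  linarith

lemma maxH_mono {f f' : ℕ → ℝ} {n : ℕ} (hn : 1 ≤ n)
    (h : ∀ i ∈ Icc 1 n, f i ≤ f' i) : maxH f n hn ≤ maxH f' n hn :=
  sup'_mono_fun fun _ hk => H_mono (mem_Icc.mp hk).2 hn h

lemma H_add_const (g : ℕ → ℝ) (c : ℝ) {n k : ℕ} (hk : k ≤ n) :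
    H (fun i => g i + c) n k = H g n k + (n + 1) * c := by
  have hcard : #(Icc (n - k + 1) n) = k := by
    rw [Nat.card_Icc]
    omega
  simp only [H, sum_add_distrib, sum_const, hcard, nsmul_eq_mul]
  ring

lemma maxH_add_const (g : ℕ → ℝ) (c : ℝ) {n : ℕ} (hn : 1 ≤ n) :
    maxH (fun i => g i + c) n hn = maxH g n hn + (n + 1) * c := by
  simp only [maxH]
  rw [sup'_congr _ rfl fun k hk => H_add_const g c (mem_Icc.mp hk).2]
  exact (sup'_add _ _ _ _).symm

theorem le_of_subsolution_of_supersolution {s t : ℕ → ℝ} (h1 : s 1 ≤ t 1)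
    (hs : ∀ n : ℕ, ∀ hn : 1 ≤ n, s (n + 1) ≤ (1 / ((n : ℝ) + 1)) * maxH s n hn)
    (ht : ∀ n : ℕ, ∀ hn : 1 ≤ n, (1 / ((n : ℝ) + 1)) * maxH t n hn ≤ t (n + 1)) :
    ∀ n : ℕ, 1 ≤ n → s n ≤ t n := by
  suffices h : ∀ n : ℕ, 1 ≤ n → ∀ i ∈ Icc 1 n, s i ≤ t i from
    fun n hn => h n hn n (mem_Icc.mpr ⟨hn, le_rfl⟩)
  intro n hn
  induction n, hn using Nat.le_induction with
  | base => simpa using h1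
  | succ n hn ih =>
    intro i hi
    rcases (mem_Icc.mp hi).2.lt_or_eq with hlt | rfl
    · exact ih i (mem_Icc.mpr ⟨(mem_Icc.mp hi).1, by omega⟩)
    · calc s (n + 1) ≤ (1 / ((n : ℝ) + 1)) * maxH s n hn := hs n hn
        _ ≤ (1 / ((n : ℝ) + 1)) * maxH t n hn := by gcongr; exact maxH_mono hn ih
        _ ≤ t (n + 1) := ht n hn

lemma add_partialSum_supersolution {g δ : ℕ → ℝ} (hδ : ∀ i, 0 ≤ δ i)
    (hg : ∀ n : ℕ, ∀ hn : 1 ≤ n, (1 / ((n : ℝ) + 1)) * maxH g n hn ≤ g (n + 1) + δ (n + 1))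
    (n : ℕ) (hn : 1 ≤ n) :
    (1 / ((n : ℝ) + 1)) * maxH (fun i => g i + ∑ j ∈ Icc 1 i, δ j) n hn ≤
      g (n + 1) + ∑ j ∈ Icc 1 (n + 1), δ j := by
  set D := ∑ j ∈ Icc 1 n, δ j
  have hbound : ∀ i ∈ Icc 1 n, g i + ∑ j ∈ Icc 1 i, δ j ≤ g i + D := fun i hi => by
    gcongr
    exact sum_le_sum_of_subset_of_nonneg (Icc_subset_Icc_right (mem_Icc.mp hi).2)
      fun j _ _ => hδ j
  have hpos : (0 : ℝ) < n + 1 := by positivity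
  calc (1 / ((n : ℝ) + 1)) * maxH (fun i => g i + ∑ j ∈ Icc 1 i, δ j) n hn
      ≤ (1 / ((n : ℝ) + 1)) * maxH (fun i => g i + D) n hn := by
        gcongr
        exact maxH_mono hn hbound
    _ = (1 / ((n : ℝ) + 1)) * maxH g n hn + D := by
        rw [maxH_add_const]
        field_simp
    _ ≤ g (n + 1) + δ (n + 1) + D := by linarith [hg n hn]
    _ = g (n + 1) + ∑ j ∈ Icc 1 (n + 1), δ j := by
        rw [sum_Icc_succ_top (by omega : 1 ≤ n + 1)]
        ring

/-- Upper comparison lemma. -/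
theorem stmt_3 (s g : ℕ → ℝ) (δ : ℕ → ℝ) (hδ : ∀ i, 0 ≤ δ i)
    (h1 : s 1 = 1)
    (hrec : ∀ n : ℕ, ∀ hn : 1 ≤ n, s (n + 1) = (1 / ((n : ℝ) + 1)) * maxH s n hn)
    (hg1 : 1 ≤ g 1 + δ 1)
    (hg : ∀ n : ℕ, ∀ hn : 1 ≤ n, (1 / ((n : ℝ) + 1)) * maxH g n hn ≤ g (n + 1) + δ (n + 1)) :
    ∀ n : ℕ, 1 ≤ n → s n ≤ g n + ∑ i ∈ Finset.Icc 1 n, δ i :=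
  le_of_subsolution_of_supersolution (t := fun n => g n + ∑ i ∈ Icc 1 n, δ i) (by simpa [h1] using hg1)
    (fun n hn => (hrec n hn).le) (add_partialSum_supersolution hδ hg)
end

section
/- For each integer n ≥ 1, let D_n(x) = 1 − (√(2n) − √(2(n−x))) − (1/6)(log n − log(n−x)) on [0,n). If x_n is the unique root of D_n(x) = 0 in [0,n), then x_n ≤ √(2n) (provided √(2n) < n, i.e. n ≥ 3). -/
/-- `D n x = 1 - (√(2n) - √(2(n-x))) - (1/6)(log n - log (n-x))`. -/
noncomputable def D (n : ℕ) (x : ℝ) : ℝ :=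
  1 - (Real.sqrt (2 * n) - Real.sqrt (2 * ((n : ℝ) - x)))
    - (1 / 6) * (Real.log n - Real.log ((n : ℝ) - x))

theorem stmt_7 (n : ℕ) (hn : 3 ≤ n) (x : ℝ) (hx : x ∈ Set.Ico (0 : ℝ) (n : ℝ))
    (hroot : D n x = 0) :
    x ≤ Real.sqrt (2 * n) := by
  obtain ⟨hx0, hxn⟩ := hx
  by_contra h
  push_neg at h
  set s := Real.sqrt (2 * n) with hs
  have hn3 : (3:ℝ) ≤ (n:ℝ) := by exact_mod_cast hn
  have hsq : s ^ 2 = 2 * n := Real.sq_sqrt (by linarith)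
  have hs0 : 0 ≤ s := Real.sqrt_nonneg _
  have hs1 : 1 ≤ s := by nlinarith
  have hsn : s < n := lt_trans h hxn
  have hkey : Real.sqrt (2 * ((n:ℝ) - s)) ≤ s - 1 := by
    calc Real.sqrt (2 * ((n:ℝ) - s)) ≤ Real.sqrt ((s - 1) ^ 2) :=
          Real.sqrt_le_sqrt (by nlinarith)
      _ = s - 1 := Real.sqrt_sq (by linarith)
  have hlog : Real.log ((n:ℝ) - s) ≤ Real.log n :=
    Real.log_le_log (by linarith) (by linarith)
  have hDs : D n s ≤ 0 := by unfold D; linarith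
  have hsqx : Real.sqrt (2 * ((n:ℝ) - x)) < Real.sqrt (2 * ((n:ℝ) - s)) :=
    Real.sqrt_lt_sqrt (by linarith) (by linarith)
  have hlogx : Real.log ((n:ℝ) - x) < Real.log ((n:ℝ) - s) :=
    Real.log_lt_log (by linarith) (by linarith)
  have hlt : D n x < D n s := by unfold D; linarith
  rw [hroot] at hlt
  linarith
end

section
/- There exists a constant C > 0 such that for all integers n ≥ 3, the unique root x_n ∈ [0,n) of the equation √(2n) − √(2(n−x)) + (1/6)(log n − log(n−x)) = 1 satisfies √(2n) − C ≤ x_n ≤ √(2n). -/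
theorem stmt_8 :
    ∃ C : ℝ, 0 < C ∧ ∀ n : ℕ, 3 ≤ n → ∀ x ∈ Set.Ico (0 : ℝ) (n : ℝ),
      Real.sqrt (2 * n) - Real.sqrt (2 * ((n : ℝ) - x))
          + (1 / 6) * (Real.log n - Real.log ((n : ℝ) - x)) = 1 →
      Real.sqrt (2 * n) - C ≤ x ∧ x ≤ Real.sqrt (2 * n) := by
  refine ⟨2, by norm_num, ?_⟩
  intro n hn x hx heq
  obtain ⟨hx0, hxn⟩ := hx
  have hN3 : (3:ℝ) ≤ (n:ℝ) := by exact_mod_cast hn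
  have hNx : 0 < (n:ℝ) - x := by linarith
  set s := Real.sqrt (2 * (n:ℝ)) with hs
  set t := Real.sqrt (2 * ((n:ℝ) - x)) with ht
  have hs2 : s ^ 2 = 2 * (n:ℝ) := Real.sq_sqrt (by linarith)
  have ht2 : t ^ 2 = 2 * ((n:ℝ) - x) := Real.sq_sqrt (by linarith)
  have hspos : 0 < s := Real.sqrt_pos.2 (by linarith)
  have htpos : 0 < t := Real.sqrt_pos.2 (by linarith)
  have hts : t ≤ s := Real.sqrt_le_sqrt (by linarith)
  have hsge : 2 ≤ s := by nlinarith
  have hlogN : Real.log (n:ℝ) = 2 * Real.log s - Real.log 2 := by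
    have h : (n:ℝ) = s ^ 2 / 2 := by linarith
    rw [h, Real.log_div (by positivity) two_ne_zero, Real.log_pow]
    push_cast; ring
  have hlogNx : Real.log ((n:ℝ) - x) = 2 * Real.log t - Real.log 2 := by
    have h : (n:ℝ) - x = t ^ 2 / 2 := by linarith
    rw [h, Real.log_div (by positivity) two_ne_zero, Real.log_pow]
    push_cast; ring
  have heq' : s - t + (1/3) * (Real.log s - Real.log t) = 1 := by
    rw [hlogN, hlogNx] at heq; linarith
  have hlog0 : 0 ≤ Real.log s - Real.log t := by
    have := Real.log_le_log htpos hts; linarith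
  have hlogub : t * (Real.log s - Real.log t) ≤ s - t := by
    have h := Real.log_le_sub_one_of_pos (show 0 < s / t from div_pos hspos htpos)
    rw [Real.log_div hspos.ne' htpos.ne'] at h
    have h2 : s / t - 1 = (s - t) / t := by field_simp
    rw [h2] at h
    calc t * (Real.log s - Real.log t) ≤ t * ((s - t) / t) := by
          exact mul_le_mul_of_nonneg_left h htpos.le
      _ = s - t := by field_simp
  have hd1 : s - t ≤ 1 := by linarith
  have hdlb : 3 * t ≤ (s - t) * (3 * t + 1) := by nlinarith
  have hxval : x = (s ^ 2 - t ^ 2) / 2 := by linarith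
  constructor
  · nlinarith [mul_pos htpos htpos]
  · nlinarith
end

section
/- In fact one may take C = 2: for all sufficiently large n, the unique root x_n of √(2n) − √(2(n−x)) + (1/6)log(n/(n−x)) = 1 satisfies √(2n) − 2 ≤ x_n ≤ √(2n). -/
set_option maxHeartbeats 1000000


theorem stmt_9 :
    ∃ N : ℕ, ∀ n : ℕ, N ≤ n → ∀ x ∈ Set.Ico (0 : ℝ) (n : ℝ),
      Real.sqrt (2 * n) - Real.sqrt (2 * ((n : ℝ) - x))
          + (1 / 6) * (Real.log ((n : ℝ) / ((n : ℝ) - x))) = 1 →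
      Real.sqrt (2 * n) - 2 ≤ x ∧ x ≤ Real.sqrt (2 * n) := by
  use 8
  intro n hn x hx h
  obtain ⟨hx0, hxn⟩ := hx
  set s := Real.sqrt (2 * n) with hs
  set y := (n : ℝ) - x with hy
  set L := Real.log ((n : ℝ) / y) with hL
  have hn8 : (8 : ℝ) ≤ (n : ℝ) := by exact_mod_cast hn
  have hy0 : 0 < y := by simp only [hy]; linarith
  have hyn : y ≤ (n : ℝ) := by simp only [hy]; linarith
  have hs2 : s ^ 2 = 2 * n := Real.sq_sqrt (by linarith)
  have hs4 : (4 : ℝ) ≤ s := by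
    have h16 : Real.sqrt 16 ≤ s := Real.sqrt_le_sqrt (by linarith)
    have : Real.sqrt 16 = 4 := by
      rw [show (16 : ℝ) = 4 ^ 2 by norm_num, Real.sqrt_sq (by norm_num)]
    linarith
  have hLnn : 0 ≤ L := Real.log_nonneg (by rw [le_div_iff₀ hy0]; linarith)
  have hsqrt : Real.sqrt (2 * y) = s - 1 + (1 / 6) * L := by linarith
  have h2y : Real.sqrt (2 * y) ^ 2 = 2 * y := Real.sq_sqrt (by linarith)
  have hkey : (s - 1 + (1 / 6) * L) ^ 2 = 2 * y := by rw [← hsqrt]; exact h2y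
  have hge : (s - 1) ^ 2 ≤ 2 * y := by nlinarith [hLnn, hs4]
  have hxle : x ≤ s - 1 / 2 := by nlinarith [hge, hs2]
  have hub : x ≤ s := by linarith
  -- lower bound
  have hnpos : 0 < (n : ℝ) / y := div_pos (by linarith) hy0
  have hlog1 : L ≤ (n : ℝ) / y - 1 := Real.log_le_sub_one_of_pos hnpos
  have hcancel : (n : ℝ) / y * y = (n : ℝ) := div_mul_cancel₀ _ hy0.ne'
  have hlogy : L * y ≤ x := by nlinarith [mul_le_mul_of_nonneg_right hlog1 hy0.le]
  have hL2 : L * (s - 1) ^ 2 ≤ 2 * s - 1 := by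
    nlinarith [mul_le_mul_of_nonneg_left hge hLnn]
  have hs1 : (0 : ℝ) < s - 1 := by linarith
  have ht : (s - 1) * L ≤ 7 / 3 := by
    have h1 : ((s - 1) * L) * (s - 1) ≤ (7 / 3) * (s - 1) := by nlinarith [hL2]
    exact le_of_mul_le_mul_right h1 hs1
  have hL79 : L ≤ 7 / 9 := by
    have h1 : L * (s - 1) ≤ (7 / 9) * (s - 1) := by nlinarith [ht, hLnn]
    exact le_of_mul_le_mul_right h1 hs1
  have hyle : 2 * y ≤ s ^ 2 - 2 * s + 4 := by
    nlinarith [ht, hL79, hLnn, mul_self_le_mul_self hLnn hL79]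
  have hlb : s - 2 ≤ x := by nlinarith [hs2]
  exact ⟨hlb, hub⟩
end
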